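/- Let (φ_{s,t}) be an evolution family in 𝔻. Then either (a) for every s ≥ 0 the set { t ∈ [s,∞) : φ_{s,t} ∈ Aut(𝔻) } is bounded above, or (b) there exists α ≥ 0 such that: (1) φ_{s,t} ∈ Aut(𝔻) for all α ≤ s ≤ t; and (2) if α > 0, then for every r ∈ [0,α) the map h_r := φ_{r,α} is NOT in Aut(𝔻), h_r → id_𝔻 uniformly on compact subsets of 𝔻 as r → α⁻, and φ_{r,t} = φ_{α,t} ∘ h_r for all 0 ≤ r < α ≤ t. Here Aut(𝔻) denotes the set of bijective holomorphic self-maps of 𝔻. -/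

import Mathlib

open Complex MeasureTheory Set Filter Topology

/-- The open unit disk `𝔻`. -/
def UD : Set ℂ := {z : ℂ | ‖z‖ < 1}

/-- A (continuous) evolution family in the unit disk: a two-parameter family of
holomorphic self-maps of `𝔻` satisfying the algebraic identities and a local
absolute-continuity condition; its members are univalent (taken here as a standing
hypothesis). -/
structure EvolutionFamilyUD where
  φ : ℝ → ℝ → ℂ → ℂ
  mapsTo : ∀ ⦃s t : ℝ⦄, 0 ≤ s → s ≤ t → Set.MapsTo (φ s t) UD UD
  holo : ∀ ⦃s t : ℝ⦄, 0 ≤ s → s ≤ t → DifferentiableOn ℂ (φ s t) UD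
  id_eq : ∀ ⦃s : ℝ⦄, 0 ≤ s → ∀ z ∈ UD, φ s s z = z
  comp : ∀ ⦃s u t : ℝ⦄, 0 ≤ s → s ≤ u → u ≤ t → ∀ z ∈ UD,
    φ s t z = φ u t (φ s u z)
  inj : ∀ ⦃s t : ℝ⦄, 0 ≤ s → s ≤ t → Set.InjOn (φ s t) UD
  ac : ∀ z ∈ UD, ∀ T : ℝ, 0 < T →
    ∃ k : ℝ → ℝ, (∀ ξ, 0 ≤ k ξ) ∧ MeasureTheory.IntegrableOn k (Set.Icc 0 T) ∧
      ∀ ⦃s u t : ℝ⦄, 0 ≤ s → s ≤ u → u ≤ t → t ≤ T →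
        ‖φ s u z - φ s t z‖ ≤ ∫ ξ in u..t, k ξ

/-!
Call `a ≥ 0` good if `φ_{s,t}` is an automorphism whenever `a ≤ s ≤ t`. Since all members are
injective, a factorisation `φ_{a,T} = φ_{t,T} ∘ φ_{s,t} ∘ φ_{a,s}` with `φ_{a,T}` bijective forces
`φ_{s,t}` to be onto; hence if `{t | φ_{s,t} ∈ Aut 𝔻}` is unbounded, `s` is good. Let `α` be the
infimum of the good times. The heart of the matter is that `α` is good itself, because
`φ_{α,t} = φ_{b,t} ∘ φ_{α,b}` with `φ_{b,t}` an automorphism and `φ_{α,b} → id` locally uniformly as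
`b → α⁺`. Then no `φ_{r,α}` with `r < α` is an automorphism, since it would make `r` good. The
local uniform convergence `φ_{r,α} → id` comes pointwise from the absolute-continuity condition and
is upgraded by Vitali's theorem.
-/

open Metric Function ComplexConjugate

lemma UD_eq_ball : UD = ball (0 : ℂ) 1 := by
  ext z
  simp [UD]

lemma isOpen_UD : IsOpen UD := UD_eq_ball ▸ isOpen_ball

lemma zero_mem_UD : (0 : ℂ) ∈ UD := by simp [UD]

lemma closedBall_subset_UD {ρ : ℝ} (hρ : ρ < 1) : closedBall (0 : ℂ) ρ ⊆ UD :=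
  UD_eq_ball ▸ closedBall_subset_ball hρ

lemma norm_conj_mul_lt_one {a z : ℂ} (ha : a ∈ UD) (hz : z ∈ UD) : ‖conj a * z‖ < 1 := by
  rw [norm_mul, norm_conj]
  exact mul_lt_one_of_nonneg_of_lt_one_left (norm_nonneg a) ha hz.le

noncomputable def diskInvolution (a z : ℂ) : ℂ := (a - z) / (1 - conj a * z)

lemma one_sub_conj_mul_ne_zero {a z : ℂ} (ha : a ∈ UD) (hz : z ∈ UD) : 1 - conj a * z ≠ 0 := by
  intro h
  simpa [← sub_eq_zero.1 h] using norm_conj_mul_lt_one ha hz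

lemma normSq_one_sub_conj_mul_sub_normSq_sub (a z : ℂ) :
    normSq (1 - conj a * z) - normSq (a - z) = (1 - normSq a) * (1 - normSq z) := by
  simp only [normSq_apply, sub_re, sub_im, mul_re, mul_im, one_re, one_im, conj_re, conj_im]
  ring

lemma diskInvolution_mem {a z : ℂ} (ha : a ∈ UD) (hz : z ∈ UD) : diskInvolution a z ∈ UD := by
  have ha' : normSq a < 1 := by
    rw [normSq_eq_norm_sq]; exact pow_lt_one₀ (norm_nonneg a) ha two_ne_zero
  have hz' : normSq z < 1 := by
    rw [normSq_eq_norm_sq]; exact pow_lt_one₀ (norm_nonneg z) hz two_ne_zero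
  have hlt : normSq (a - z) < normSq (1 - conj a * z) := by
    nlinarith [normSq_one_sub_conj_mul_sub_normSq_sub a z]
  rw [UD, mem_ofPred_eq, diskInvolution, norm_div,
    div_lt_one (norm_pos_iff.2 (one_sub_conj_mul_ne_zero ha hz))]
  simpa [norm_def] using Real.sqrt_lt_sqrt (normSq_nonneg _) hlt

@[simp] lemma diskInvolution_zero (a : ℂ) : diskInvolution a 0 = a := by simp [diskInvolution]

@[simp] lemma diskInvolution_self (a : ℂ) : diskInvolution a a = 0 := by simp [diskInvolution]

lemma diskInvolution_diskInvolution {a z : ℂ} (ha : a ∈ UD) (hz : z ∈ UD) :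
    diskInvolution a (diskInvolution a z) = z := by
  have h₁ : 1 - z * conj a ≠ 0 := mul_comm z (conj a) ▸ one_sub_conj_mul_ne_zero ha hz
  have h₂ := one_sub_conj_mul_ne_zero ha (diskInvolution_mem ha hz)
  have h₃ := one_sub_conj_mul_ne_zero ha ha
  simp only [diskInvolution] at h₂ ⊢
  rw [div_eq_iff h₂]
  field_simp
  ring

lemma differentiableOn_diskInvolution {a : ℂ} (ha : a ∈ UD) :
    DifferentiableOn ℂ (diskInvolution a) UD :=
  ((differentiableOn_const a).sub differentiableOn_id).div
    ((differentiableOn_const 1).sub ((differentiableOn_const _).mul differentiableOn_id))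
    fun _ hz => one_sub_conj_mul_ne_zero ha hz

/-- The Schwarz–Pick lemma: holomorphic self-maps of `𝔻` contract the pseudo-hyperbolic
distance `‖diskInvolution v w‖`. -/
lemma norm_diskInvolution_le {f : ℂ → ℂ} (hd : DifferentiableOn ℂ f UD) (hm : MapsTo f UD UD)
    {v w : ℂ} (hv : v ∈ UD) (hw : w ∈ UD) :
    ‖diskInvolution (f v) (f w)‖ ≤ ‖diskInvolution v w‖ := by
  set g : ℂ → ℂ := diskInvolution (f v) ∘ f ∘ diskInvolution v
  have hg : MapsTo g UD UD := fun z hz => diskInvolution_mem (hm hv) (hm (diskInvolution_mem hv hz))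
  have hgd : DifferentiableOn ℂ g UD :=
    (differentiableOn_diskInvolution (hm hv)).comp
      (hd.comp (differentiableOn_diskInvolution hv) fun _ hz => diskInvolution_mem hv hz)
      fun _ hz => hm (diskInvolution_mem hv hz)
  rw [UD_eq_ball] at hg hgd
  have := Complex.norm_le_norm_of_mapsTo_ball hgd (hg.mono_right ball_subset_closedBall)
    (by simp [g]) (diskInvolution_mem hv hw)
  simpa only [g, comp_apply, diskInvolution_diskInvolution hv hw] using this

lemma norm_le_of_norm_diskInvolution_le {a z : ℂ} {c : ℝ} (ha : a ∈ UD) (hz : z ∈ UD)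
    (h : ‖diskInvolution a z‖ ≤ c) : ‖z‖ ≤ ‖a‖ + c * (1 + ‖a‖) := by
  have hd := norm_pos_iff.2 (one_sub_conj_mul_ne_zero ha hz)
  rw [diskInvolution, norm_div, div_le_iff₀ hd] at h
  have hc : 0 ≤ c := le_of_mul_le_mul_right (by simpa using (norm_nonneg _).trans h) hd
  calc ‖z‖ ≤ ‖a‖ + ‖a - z‖ := by simpa using norm_sub_le a (a - z)
    _ ≤ ‖a‖ + c * ‖1 - conj a * z‖ := by gcongr
    _ ≤ ‖a‖ + c * (1 + ‖a‖) := by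
      gcongr
      calc ‖1 - conj a * z‖ ≤ 1 + ‖conj a * z‖ := by simpa using norm_sub_le (1 : ℂ) (conj a * z)
        _ ≤ 1 + ‖a‖ := by
          rw [norm_mul, norm_conj]; gcongr; exact mul_le_of_le_one_right (norm_nonneg a) hz.le

lemma dist_le_of_mapsTo_UD {f : ℂ → ℂ} (hd : DifferentiableOn ℂ f UD) (hm : MapsTo f UD UD)
    {c z : ℂ} (hc : c ∈ UD) (hz : dist z c < 1 - ‖c‖) :
    dist (f z) (f c) ≤ 2 / (1 - ‖c‖) * dist z c := by
  have hsub : ball c (1 - ‖c‖) ⊆ UD := UD_eq_ball ▸ ball_subset_ball' (by simp)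
  refine Complex.dist_le_div_mul_dist_of_mapsTo_ball (hd.mono hsub) (fun x hx => ?_) hz
  have := (dist_le_norm_add_norm (f x) (f c)).trans_lt
    (add_lt_add (hm (hsub hx)) (hm hc) : ‖f x‖ + ‖f c‖ < 1 + 1)
  exact mem_closedBall.2 (by linarith)

lemma equicontinuousAt_of_mapsTo_UD {ι : Type*} {F : ι → ℂ → ℂ}
    (hd : ∀ i, DifferentiableOn ℂ (F i) UD) (hm : ∀ i, MapsTo (F i) UD UD) {c : ℂ} (hc : c ∈ UD) :
    EquicontinuousAt F c := by
  rw [Metric.equicontinuousAt_iff_right]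
  intro ε hε
  have hc' : 0 < 1 - ‖c‖ := sub_pos.2 hc
  filter_upwards [ball_mem_nhds c (lt_min hc' (by positivity : 0 < ε * (1 - ‖c‖) / 4))]
    with z hz i
  have hz₁ : dist z c < 1 - ‖c‖ := hz.trans_le (min_le_left _ _)
  have hz₂ : dist z c < ε * (1 - ‖c‖) / 4 := hz.trans_le (min_le_right _ _)
  rw [dist_comm]
  calc dist (F i z) (F i c) ≤ 2 / (1 - ‖c‖) * dist z c := dist_le_of_mapsTo_UD (hd i) (hm i) hc hz₁
    _ ≤ 2 / (1 - ‖c‖) * (ε * (1 - ‖c‖) / 4) := by gcongr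
    _ < ε := by field_simp; linarith

/-- Vitali's theorem: holomorphic self-maps of `𝔻` are equicontinuous (Schwarz lemma), so by
Arzelà–Ascoli pointwise convergence is uniform on compact sets. -/
lemma tendstoUniformlyOn_of_tendsto_of_mapsTo_UD {ι : Type*} {l : Filter ι} {F : ι → ℂ → ℂ}
    {f : ℂ → ℂ} (hF : ∀ᶠ i in l, DifferentiableOn ℂ (F i) UD ∧ MapsTo (F i) UD UD)
    (hlim : ∀ z ∈ UD, Tendsto (fun i => F i z) l (𝓝 (f z))) {K : Set ℂ} (hK : K ⊆ UD)
    (hKc : IsCompact K) : TendstoUniformlyOn F f l K := by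
  classical
  obtain ⟨S, hSl, hS⟩ := hF.exists_mem
  set F' : ι → ℂ → ℂ := fun i => if i ∈ S then F i else id
  have hFF' : ∀ᶠ i in l, EqOn (F' i) (F i) K :=
    Filter.mem_of_superset hSl fun i hi z _ => by simp [F', hi]
  have hF' : ∀ i, DifferentiableOn ℂ (F' i) UD ∧ MapsTo (F' i) UD UD := fun i => by
    by_cases hi : i ∈ S
    · simpa [F', hi] using hS i hi
    · simpa [F', hi] using ⟨differentiableOn_id, mapsTo_id UD⟩
  have heq : EquicontinuousOn F' K := fun z hz =>
    (equicontinuousAt_of_mapsTo_UD (fun i => (hF' i).1) (fun i => (hF' i).2)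
      (hK hz)).equicontinuousWithinAt K
  have key := (EquicontinuousOn.tendsto_uniformOnFun_iff_pi' (𝔖 := {K}) (by simpa using hKc)
    (by simpa using heq) l f).2 ?_
  · refine (UniformOnFun.tendsto_iff_tendstoUniformlyOn.1 key K rfl).congr ?_
    filter_upwards [hFF'] with i hi
    exact hi
  · rw [sUnion_singleton, tendsto_pi_nhds]
    rintro ⟨z, hz⟩
    refine (hlim z (hK hz)).congr' ?_
    filter_upwards [hFF'] with i hi
    exact (hi hz).symm

lemma Set.InjOn.eventually_nhdsNE_ne {X Y : Type*} [TopologicalSpace X] {f : X → Y} {U : Set X}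
    {x : X} (hf : InjOn f U) (hU : U ∈ 𝓝 x) : ∀ᶠ y in 𝓝[≠] x, f y ≠ f x := by
  filter_upwards [nhdsWithin_le_nhds hU, self_mem_nhdsWithin] with y hy hne heq
  exact hne (hf hy (mem_of_mem_nhds hU) heq)

lemma mem_image_closedBall_of_dist_le {f : ℂ → ℂ} {v : ℂ} {δ η : ℝ}
    (hf : DiffContOnCl ℂ f (ball v δ)) (hinj : InjOn f (closedBall v δ)) (hδ : 0 < δ)
    (hηδ : 4 * η < δ) (hη : ∀ z ∈ closedBall v δ, dist (f z) z ≤ η) :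
    v ∈ f '' closedBall v δ := by
  have hv : dist (f v) v ≤ η := hη v (mem_closedBall_self hδ.le)
  refine hf.ball_subset_image_closedBall hδ (ε := δ - 2 * η) (fun z hz => ?_) ?_ ?_
  · rw [← dist_eq_norm]
    linarith [dist_triangle4 z (f z) (f v) v, dist_comm z (f z), mem_sphere.1 hz,
      hη z (sphere_subset_closedBall hz)]
  · exact ((hinj.eventually_nhdsNE_ne (closedBall_mem_nhds v hδ)).frequently).filter_mono
      nhdsWithin_le_nhds
  · rw [mem_ball, dist_comm]
    linarith

section InverseFunction

variable {f : ℂ → ℂ} {U : Set ℂ} {z : ℂ}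

lemma nhds_le_map_nhds_of_injOn (hU : IsOpen U) (hf : DifferentiableOn ℂ f U) (hinj : InjOn f U)
    (hz : z ∈ U) : 𝓝 (f z) ≤ map f (𝓝 z) := by
  refine ((hf.analyticOnNhd hU z hz).eventually_constant_or_nhds_le_map_nhds).resolve_left
    fun hconst => ?_
  obtain ⟨y, hne, heq⟩ := ((hinj.eventually_nhdsNE_ne (hU.mem_nhds hz)).and
    (hconst.filter_mono nhdsWithin_le_nhds)).exists
  exact hne heq

lemma eventually_apply_invFunOn_eq (hU : IsOpen U) (hf : DifferentiableOn ℂ f U)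
    (hinj : InjOn f U) (hz : z ∈ U) : ∀ᶠ y in 𝓝 (f z), f (invFunOn f U y) = y := by
  filter_upwards [nhds_le_map_nhds_of_injOn hU hf hinj hz (image_mem_map (hU.mem_nhds hz))]
    with y hy using invFunOn_eq hy

lemma continuousAt_invFunOn (hU : IsOpen U) (hf : DifferentiableOn ℂ f U) (hinj : InjOn f U)
    (hz : z ∈ U) : ContinuousAt (invFunOn f U) (f z) := by
  have hleft : invFunOn f U ∘ f =ᶠ[𝓝 z] id := by
    filter_upwards [hU.mem_nhds hz] with x hx using hinj.leftInvOn_invFunOn hx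
  rw [ContinuousAt, hinj.leftInvOn_invFunOn hz]
  exact (tendsto_map'_iff.2 (tendsto_id.congr' hleft.symm)).mono_left
    (nhds_le_map_nhds_of_injOn hU hf hinj hz)

lemma tendsto_invFunOn_nhdsNE (hU : IsOpen U) (hf : DifferentiableOn ℂ f U) (hinj : InjOn f U)
    (hz : z ∈ U) : Tendsto (invFunOn f U) (𝓝[≠] (f z)) (𝓝[≠] z) := by
  refine tendsto_nhdsWithin_iff.2 ⟨?_, ?_⟩
  · have := (continuousAt_invFunOn hU hf hinj hz).tendsto.mono_left
      (nhdsWithin_le_nhds (s := {f z}ᶜ))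
    rwa [hinj.leftInvOn_invFunOn hz] at this
  · filter_upwards [nhdsWithin_le_nhds (eventually_apply_invFunOn_eq hU hf hinj hz),
      self_mem_nhdsWithin] with y hy hne heq
    exact hne (hy ▸ congrArg f heq)

lemma eventually_nhdsNE_deriv_ne_zero (hU : IsOpen U) (hf : DifferentiableOn ℂ f U)
    (hinj : InjOn f U) (hz : z ∈ U) : ∀ᶠ y in 𝓝[≠] z, deriv f y ≠ 0 := by
  refine ((hf.analyticOnNhd hU).deriv z hz).eventually_eq_zero_or_eventually_ne_zero.resolve_left
    fun hzero => ?_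
  obtain ⟨ε, hε, hball⟩ := Metric.eventually_nhds_iff_ball.1 (hzero.and (hU.eventually_mem hz))
  have hconst : ∀ y ∈ ball z ε, f y = f z := fun y hy =>
    isOpen_ball.is_const_of_deriv_eq_zero (convex_ball z ε).isPreconnected
      (hf.mono fun x hx => (hball x hx).2) (fun x hx => (hball x hx).1) hy (mem_ball_self hε)
  obtain ⟨y, hne, hy⟩ := ((hinj.eventually_nhdsNE_ne (hU.mem_nhds hz)).and
    (nhdsWithin_le_nhds (ball_mem_nhds z hε))).exists
  exact hne (hconst y hy)

theorem Set.InjOn.differentiableOn_invFunOn (hU : IsOpen U) (hf : DifferentiableOn ℂ f U)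
    (hinj : InjOn f U) : DifferentiableOn ℂ (invFunOn f U) (f '' U) := by
  set g := invFunOn f U
  -- Off the isolated zeros of `f'` the inverse function theorem applies; at the zeros, `g` has a
  -- removable singularity since it is continuous.
  have hdiff : ∀ x ∈ U, deriv f x ≠ 0 → DifferentiableAt ℂ g (f x) := fun x hx hne => by
    have hf' := (hf.differentiableAt (hU.mem_nhds hx)).hasDerivAt
    rw [← hinj.leftInvOn_invFunOn hx] at hf'
    exact (HasDerivAt.of_local_left_inverse (continuousAt_invFunOn hU hf hinj hx) hf'
      (by rwa [hinj.leftInvOn_invFunOn hx])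
      (eventually_apply_invFunOn_eq hU hf hinj hx)).differentiableAt
  rintro _ ⟨z, hz, rfl⟩
  have htend := tendsto_invFunOn_nhdsNE hU hf hinj hz
  have hpunct : ∀ᶠ y in 𝓝[≠] (f z), DifferentiableAt ℂ g y := by
    filter_upwards [htend.eventually (eventually_nhdsNE_deriv_ne_zero hU hf hinj hz),
      htend.eventually (nhdsWithin_le_nhds (hU.mem_nhds hz)),
      nhdsWithin_le_nhds (eventually_apply_invFunOn_eq hU hf hinj hz)] with y hne hyU hy
    simpa [g, hy] using hdiff (g y) hyU hne
  exact (analyticAt_of_differentiable_on_punctured_nhds_of_continuousAt hpunct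
    (continuousAt_invFunOn hU hf hinj hz)).differentiableAt.differentiableWithinAt

end InverseFunction

namespace EvolutionFamilyUD

variable (E : EvolutionFamilyUD) {a r s t T : ℝ} {z : ℂ}

lemma exists_continuous_dist_le (hz : z ∈ UD) (hT : 0 < T) :
    ∃ Φ : ℝ → ℝ, Continuous Φ ∧
      ∀ ⦃u t⦄, 0 ≤ u → u ≤ t → t ≤ T → dist (E.φ u t z) z ≤ Φ t - Φ u := by
  obtain ⟨k, -, hk, hbound⟩ := E.ac z hz T hT
  set k' := (Icc 0 T).indicator k
  have hk' : Integrable k' := (integrable_indicator_iff measurableSet_Icc).2 hk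
  refine ⟨fun r => ∫ ξ in 0..r, k' ξ, hk'.continuous_primitive 0, fun u t hu hut htT => ?_⟩
  have hut' := hbound hu le_rfl hut htT
  rw [E.id_eq hu z hz] at hut'
  rw [intervalIntegral.integral_interval_sub_left hk'.intervalIntegrable hk'.intervalIntegrable,
    dist_comm, dist_eq_norm]
  refine hut'.trans_eq (intervalIntegral.integral_congr fun ξ hξ => ?_)
  rw [uIcc_of_le hut] at hξ
  exact (indicator_of_mem (show ξ ∈ Icc 0 T from ⟨hu.trans hξ.1, hξ.2.trans htT⟩) k).symm

lemma tendsto_nhdsLT (ha : 0 < a) (hz : z ∈ UD) :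
    Tendsto (fun r => E.φ r a z) (𝓝[<] a) (𝓝 z) := by
  obtain ⟨Φ, hΦ, hbound⟩ := E.exists_continuous_dist_le hz ha
  refine tendsto_iff_dist_tendsto_zero.2
    (squeeze_zero' (Eventually.of_forall fun _ => dist_nonneg) ?_ (g := fun r => Φ a - Φ r) ?_)
  · filter_upwards [Ioo_mem_nhdsLT ha] with r hr using hbound hr.1.le hr.2.le le_rfl
  · have : Tendsto (fun r => Φ a - Φ r) (𝓝 a) (𝓝 (Φ a - Φ a)) :=
      tendsto_const_nhds.sub (hΦ.tendsto a)
    simpa using this.mono_left nhdsWithin_le_nhds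

lemma tendsto_nhdsGT (ha : 0 ≤ a) (hz : z ∈ UD) :
    Tendsto (fun t => E.φ a t z) (𝓝[>] a) (𝓝 z) := by
  obtain ⟨Φ, hΦ, hbound⟩ := E.exists_continuous_dist_le hz (by linarith : 0 < a + 1)
  refine tendsto_iff_dist_tendsto_zero.2
    (squeeze_zero' (Eventually.of_forall fun _ => dist_nonneg) ?_ (g := fun t => Φ t - Φ a) ?_)
  · filter_upwards [Ioo_mem_nhdsGT (lt_add_one a)] with t ht using hbound ha ht.1.le ht.2.le
  · have : Tendsto (fun t => Φ t - Φ a) (𝓝 a) (𝓝 (Φ a - Φ a)) :=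
      (hΦ.tendsto a).sub tendsto_const_nhds
    simpa using this.mono_left nhdsWithin_le_nhds

lemma tendstoUniformlyOn_nhdsLT (ha : 0 < a) {K : Set ℂ} (hK : K ⊆ UD) (hKc : IsCompact K) :
    TendstoUniformlyOn (fun r z => E.φ r a z) (fun z => z) (𝓝[<] a) K := by
  refine tendstoUniformlyOn_of_tendsto_of_mapsTo_UD ?_ (fun z hz => E.tendsto_nhdsLT ha hz) hK hKc
  filter_upwards [Ioo_mem_nhdsLT ha] with r hr
  exact ⟨E.holo hr.1.le hr.2.le, E.mapsTo hr.1.le hr.2.le⟩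

lemma tendstoUniformlyOn_nhdsGT (ha : 0 ≤ a) {K : Set ℂ} (hK : K ⊆ UD) (hKc : IsCompact K) :
    TendstoUniformlyOn (fun t z => E.φ a t z) (fun z => z) (𝓝[>] a) K := by
  refine tendstoUniformlyOn_of_tendsto_of_mapsTo_UD ?_ (fun z hz => E.tendsto_nhdsGT ha hz) hK hKc
  filter_upwards [self_mem_nhdsWithin] with t (ht : a < t)
  exact ⟨E.holo ha ht.le, E.mapsTo ha ht.le⟩

lemma bijOn_of_surjOn (hs : 0 ≤ s) (hst : s ≤ t) (h : SurjOn (E.φ s t) UD UD) :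
    BijOn (E.φ s t) UD UD :=
  ⟨E.mapsTo hs hst, E.inj hs hst, h⟩

lemma bijOn_trans (hr : 0 ≤ r) (hrs : r ≤ s) (hst : s ≤ t) (hr' : BijOn (E.φ r s) UD UD)
    (hs' : BijOn (E.φ s t) UD UD) : BijOn (E.φ r t) UD UD :=
  (hs'.comp hr').congr fun z hz => (E.comp hr hrs hst z hz).symm

lemma bijOn_of_le (ha : 0 ≤ a) (has : a ≤ s) (hst : s ≤ t) (htT : t ≤ T)
    (h : BijOn (E.φ a T) UD UD) : BijOn (E.φ s t) UD UD := by
  have hs := ha.trans has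
  have ht := hs.trans hst
  refine E.bijOn_of_surjOn hs hst fun y hy => ?_
  obtain ⟨x, hx, hxy⟩ := h.surjOn (E.mapsTo ht htT hy)
  refine ⟨E.φ a s x, E.mapsTo ha has hx, E.inj ht htT (E.mapsTo hs hst (E.mapsTo ha has hx)) hy ?_⟩
  rw [← hxy, ← E.comp hs hst htT _ (E.mapsTo ha has hx), ← E.comp ha has (hst.trans htT) x hx]

def AutAfter (a : ℝ) : Prop := ∀ s t, a ≤ s → s ≤ t → BijOn (E.φ s t) UD UD

variable {E} in
lemma AutAfter.mono {b : ℝ} (h : E.AutAfter a) (hab : a ≤ b) : E.AutAfter b :=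
  fun s t hs hst => h s t (hab.trans hs) hst

lemma autAfter_of_not_bddAbove (hs : 0 ≤ s)
    (h : ¬BddAbove {t | s ≤ t ∧ BijOn (E.φ s t) UD UD}) : E.AutAfter s := fun u t hsu hut => by
  obtain ⟨T, ⟨-, hT⟩, htT⟩ := not_bddAbove_iff.1 h t
  exact E.bijOn_of_le hs hsu hut htT.le hT

lemma autAfter_of_bijOn (hr : 0 ≤ r) (hra : r ≤ a) (h : BijOn (E.φ r a) UD UD)
    (ha : E.AutAfter a) : E.AutAfter r := fun _ t hrs hst =>
  E.bijOn_of_le hr hrs hst (le_max_left t a) <|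
    E.bijOn_trans hr hra (le_max_right t a) h (ha a _ le_rfl (le_max_right t a))

/-- By Schwarz–Pick for the inverse of `φ_{b,t}`, the preimage of `w` under `φ_{b,t}` stays in a
fixed compact subdisc as `b → a⁺`, and `φ_{a,b}`, uniformly close to the identity there, attains
it. -/
lemma surjOn_of_forall_bijOn (ha : 0 ≤ a) (hat : a < t)
    (h : ∀ b ∈ Ioo a t, BijOn (E.φ b t) UD UD) : SurjOn (E.φ a t) UD UD := by
  intro w hw
  have hw₀ : E.φ a t 0 ∈ UD := E.mapsTo ha hat.le zero_mem_UD
  set c := ‖diskInvolution (E.φ a t 0) w‖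
  have hc : c < 1 := diskInvolution_mem hw₀ hw
  have hc₀ : 0 ≤ c := norm_nonneg _
  -- small enough that the disc of radius `(1 - c) / 4 > 4 η` about the preimage of `w` lies in
  -- `closedBall 0 ((1 + c) / 2)`
  set η := (1 - c) / 20 with hη
  obtain ⟨b, hclose, hab, hbt⟩ : ∃ b, (∀ z ∈ closedBall (0 : ℂ) ((1 + c) / 2),
      dist (E.φ a b z) z ≤ η) ∧ b ∈ Ioo a t := by
    have hu := Metric.tendstoUniformlyOn_iff.1 (E.tendstoUniformlyOn_nhdsGT ha
      (closedBall_subset_UD (ρ := (1 + c) / 2) (by linarith)) (isCompact_closedBall 0 _)) η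
      (by positivity)
    obtain ⟨b, hb, hbI⟩ := (hu.and (Ioo_mem_nhdsGT hat)).exists
    exact ⟨b, fun z hz => (dist_comm _ _).trans_le (hb z hz).le, hbI⟩
  have hb := ha.trans hab.le
  have hbij := h b ⟨hab, hbt⟩
  set g := invFunOn (E.φ b t) UD
  have hg : DifferentiableOn ℂ g UD := by
    simpa [hbij.image_eq] using
      (E.inj hb hbt.le).differentiableOn_invFunOn isOpen_UD (E.holo hb hbt.le)
  have hgm : MapsTo g UD UD := hbij.surjOn.mapsTo_invFunOn
  have hq : E.φ a b 0 ∈ UD := E.mapsTo ha hab.le zero_mem_UD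
  have hgw₀ : g (E.φ a t 0) = E.φ a b 0 := by
    rw [E.comp ha hab.le hbt.le 0 zero_mem_UD]
    exact hbij.invOn_invFunOn.1 hq
  have hq' : ‖E.φ a b 0‖ ≤ η := by simpa using hclose 0 (mem_closedBall_self (by linarith))
  have hgw : ‖g w‖ ≤ c + 2 * η := by
    have : ‖g w‖ ≤ ‖E.φ a b 0‖ + c * (1 + ‖E.φ a b 0‖) := norm_le_of_norm_diskInvolution_le hq
      (hgm hw) (hgw₀ ▸ norm_diskInvolution_le hg hgm hw₀ hw)
    nlinarith [mul_le_mul_of_nonneg_left hq' hc₀]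
  have hsub : closedBall (g w) ((1 - c) / 4) ⊆ closedBall 0 ((1 + c) / 2) :=
    closedBall_subset_closedBall' (by rw [dist_zero_right]; linarith)
  have hsubUD := hsub.trans (closedBall_subset_UD (by linarith))
  obtain ⟨x, hx, hxw⟩ := mem_image_closedBall_of_dist_le
    ((E.holo ha hab.le).mono (closure_ball_subset_closedBall.trans hsubUD)).diffContOnCl
    ((E.inj ha hab.le).mono hsubUD) (by linarith) (by linarith) fun z hz => hclose z (hsub hz)
  exact ⟨x, hsubUD hx, by rw [E.comp ha hab.le hbt.le x (hsubUD hx), hxw, hbij.invOn_invFunOn.2 hw]⟩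

lemma autAfter_of_forall_gt (ha : 0 ≤ a) (h : ∀ b > a, E.AutAfter b) : E.AutAfter a := by
  intro s t has hst
  rcases has.lt_or_eq with has | rfl
  · exact h s has s t le_rfl hst
  rcases hst.lt_or_eq with hst | rfl
  · exact E.bijOn_of_surjOn ha hst.le <|
      E.surjOn_of_forall_bijOn ha hst fun b hb => h b hb.1 b t le_rfl hb.2.le
  · exact E.bijOn_of_surjOn ha le_rfl fun w hw => ⟨w, hw, E.id_eq ha w hw⟩

end EvolutionFamilyUD

/-- For an evolution family in `𝔻`, either for every `s ≥ 0` the set of times `t ≥ s` at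
which `φ_{s,t}` is an automorphism of `𝔻` is bounded above, or there exists `α ≥ 0` such
that `φ_{s,t} ∈ Aut(𝔻)` whenever `α ≤ s ≤ t` and, if `α > 0`, the maps `h_r := φ_{r,α}`
(`0 ≤ r < α`) are never automorphisms, converge locally uniformly to the identity as
`r → α⁻`, and satisfy `φ_{r,t} = φ_{α,t} ∘ h_r` for `0 ≤ r < α ≤ t`. -/
theorem evolutionFamilyUD_automorphism_dichotomy (E : EvolutionFamilyUD) :
    (∀ s : ℝ, 0 ≤ s → BddAbove {t : ℝ | s ≤ t ∧ Set.BijOn (E.φ s t) UD UD}) ∨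
    (∃ α : ℝ, 0 ≤ α ∧
      (∀ s t : ℝ, α ≤ s → s ≤ t → Set.BijOn (E.φ s t) UD UD) ∧
      (0 < α →
        (∀ r : ℝ, 0 ≤ r → r < α → ¬ Set.BijOn (E.φ r α) UD UD) ∧
        (∀ K : Set ℂ, K ⊆ UD → IsCompact K →
          TendstoUniformlyOn (fun r z => E.φ r α z) (fun z => z) (𝓝[<] α) K) ∧
        (∀ r t : ℝ, 0 ≤ r → r < α → α ≤ t → ∀ z ∈ UD,
          E.φ r t z = E.φ α t (E.φ r α z)))) := by
  refine or_iff_not_imp_left.2 fun hbdd => ?_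
  push Not at hbdd
  obtain ⟨s₀, hs₀, hs₀'⟩ := hbdd
  set S := {a : ℝ | 0 ≤ a ∧ E.AutAfter a}
  have hSne : S.Nonempty := ⟨s₀, hs₀, E.autAfter_of_not_bddAbove hs₀ hs₀'⟩
  have hSbdd : BddBelow S := ⟨0, fun _ ha => ha.1⟩
  have hα : 0 ≤ sInf S := le_csInf hSne fun _ ha => ha.1
  have hαS : E.AutAfter (sInf S) := E.autAfter_of_forall_gt hα fun b hb => by
    obtain ⟨a, ha, hab⟩ := exists_lt_of_csInf_lt hSne hb
    exact ha.2.mono hab.le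
  refine ⟨sInf S, hα, hαS, fun hαpos => ⟨fun r hr hrα hbij => ?_,
    fun K hK hKc => E.tendstoUniformlyOn_nhdsLT hαpos hK hKc,
    fun r t hr hrα hαt => E.comp hr hrα.le hαt⟩⟩
  exact hrα.not_ge (csInf_le hSbdd ⟨hr, E.autAfter_of_bijOn hr hrα.le hbij hαS⟩)
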